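/- Assume every vertex of {1,…,n} lies in some facet of Δ but no vertex lies in all facets, and that G_Δ is isomorphic to the cycle C_m with m ≥ 4. Then Δ is shellable if and only if m = n and, after a suitable relabeling of the facets and vertices, vertex i belongs to F_i ∩ F_{i+1} and i ∉ F_j for all j ≠ i, i+1 (indices taken modulo n). -/

import Mathlib

/-!
In a shelling, a vertex that a facet shares with an earlier facet also lies in an earlier
neighbour of it in the facet graph. By a minimal-element argument, the facets containing a fixed
vertex `v` are therefore connected in the facet graph, even after discarding those that come
after a given time. If `c ≥ 3`, the last
facet `L` of a shelling shares a vertex `v` with both of its neighbours; the facets containing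
`v` other than `L` form a connected set in the path `C_m - L` containing both of its ends, so
`v` lies in every facet. If `c ≤ 1`, any two distinct facets are adjacent, but `C_m` has no triangle.
So `c = 2`, `F i ∩ F (i + 1)` is a single vertex `s i`, triangle-freeness makes `s` a bijection
and `F j = {s (j - 1), s j}`. Conversely, such a cycle is shelled in its natural order.
-/

open Finset

/-- The facet graph `G_Δ` of a pure simplicial complex with facets `Fc i`, all of
cardinality `c`: two facets are adjacent iff they are connected in codimension one,
i.e. their intersection has cardinality `c - 1`. -/
def facetGraph {n m : ℕ} (Fc : Fin m → Finset (Fin n)) (c : ℕ) : SimpleGraph (Fin m) where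
  Adj i j := i ≠ j ∧ (Fc i ∩ Fc j).card + 1 = c
  symm := by
    constructor
    intro i j h
    exact ⟨h.1.symm, by rw [Finset.inter_comm]; exact h.2⟩
  loopless := by constructor; intro i h; exact h.1 rfl

/-- Shellability of a pure simplicial complex with facets `Fc i`: there is an ordering
`Fc (σ 0), …, Fc (σ (m-1))` of the facets such that for every `b ≥ 1` the subcomplex
`⟨Fc (σ 0), …, Fc (σ (b-1))⟩ ∩ ⟨Fc (σ b)⟩` is pure of dimension `|Fc (σ b)| - 2`;
equivalently (the standard reformulation), for all `a < b` there is `c < b` with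
`Fc (σ a) ∩ Fc (σ b) ⊆ Fc (σ c) ∩ Fc (σ b)` and `|Fc (σ c) ∩ Fc (σ b)| = |Fc (σ b)| - 1`. -/
def Shellable {n m : ℕ} (Fc : Fin m → Finset (Fin n)) : Prop :=
  ∃ σ : Equiv.Perm (Fin m), ∀ a b : Fin m, a < b → ∃ c : Fin m, c < b ∧
    Fc (σ a) ∩ Fc (σ b) ⊆ Fc (σ c) ∩ Fc (σ b) ∧
    (Fc (σ c) ∩ Fc (σ b)).card + 1 = (Fc (σ b)).card

namespace Fin

variable {m : ℕ} [NeZero m]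

lemma val_add_one_eq_ite (hm : 2 ≤ m) (j : Fin m) :
    (j + 1).val = if j.val + 1 = m then 0 else j.val + 1 := by
  rw [val_add_eq_ite, val_one', Nat.mod_eq_of_lt (by omega : 1 < m)]
  have := j.isLt
  split_ifs <;> omega

lemma add_one_ne_self (hm : 2 ≤ m) (i : Fin m) : i + 1 ≠ i := by
  have h := val_add_one_eq_ite hm i
  rw [Ne, Fin.ext_iff]
  split_ifs at h <;> omega

lemma sub_one_ne_self (hm : 2 ≤ m) (i : Fin m) : i - 1 ≠ i := fun h =>
  add_one_ne_self hm (i - 1) (by rw [sub_add_cancel, h])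

lemma add_one_add_one_ne_self (hm : 3 ≤ m) (i : Fin m) : i + 1 + 1 ≠ i := by
  have h₁ := val_add_one_eq_ite (by omega) i
  have h₂ := val_add_one_eq_ite (by omega) (i + 1)
  rw [Ne, Fin.ext_iff]
  split_ifs at h₁ h₂ <;> omega

lemma val_add_one_sub (hm : 2 ≤ m) {b p : Fin m} (h : p + 1 ≠ b) :
    (p + 1 - b).val = (p - b).val + 1 := by
  rw [add_sub_right_comm, val_add_one_eq_ite hm, if_neg]
  intro hwrap
  apply h
  rw [← sub_eq_zero, add_sub_right_comm]
  exact Fin.ext (by rw [val_add_one_eq_ite hm, if_pos hwrap, val_zero])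

lemma false_of_cycle_triangle (hm : 4 ≤ m) {i j k : Fin m}
    (hij : j = i + 1 ∨ i = j + 1) (hik : k = i + 1 ∨ i = k + 1) (hjk : k = j + 1 ∨ j = k + 1) :
    False := by
  have hi := val_add_one_eq_ite (by omega) i
  have hj := val_add_one_eq_ite (by omega) j
  have hk := val_add_one_eq_ite (by omega) k
  simp only [Fin.ext_iff] at hij hik hjk
  split_ifs at hi hj hk <;> omega

end Fin

lemma Finset.card_inter_lt_of_ne {α : Type*} [DecidableEq α] {s t : Finset α} (hst : s ≠ t)
    (hcard : #s = #t) : #(s ∩ t) < #s :=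
  card_lt_card <| ssubset_of_subset_of_ne inter_subset_left fun h =>
    hst (eq_of_subset_of_card_le (inter_eq_left.mp h) hcard.ge)

variable {n m c : ℕ} {Fc : Fin m → Finset (Fin n)}

lemma card_inter_lt_of_injective (hinj : Function.Injective Fc) (hpure : ∀ i, (Fc i).card = c)
    {i j : Fin m} (hij : i ≠ j) : (Fc i ∩ Fc j).card < c :=
  hpure i ▸ card_inter_lt_of_ne (hinj.ne hij) ((hpure i).trans (hpure j).symm)

lemma forall_mem_iff_iff_forall_eq_pair [NeZero m] (s : Fin m ≃ Fin n) :
    (∀ a j, a ∈ Fc j ↔ (j = s.symm a ∨ j = s.symm a + 1)) ↔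
      ∀ j, Fc j = {s (j - 1), s j} := by
  have hpair : ∀ a j, a ∈ ({s (j - 1), s j} : Finset (Fin n)) ↔
      (j = s.symm a ∨ j = s.symm a + 1) := by
    intro a j
    rw [mem_insert, mem_singleton, ← Equiv.symm_apply_eq, ← Equiv.symm_apply_eq, eq_sub_iff_add_eq,
      or_comm, eq_comm, @eq_comm _ _ j]
  refine ⟨fun h j => ext fun a => by rw [h, hpair], fun h a j => by rw [h, hpair]⟩

def IsShelling (Fc : Fin m → Finset (Fin n)) (σ : Equiv.Perm (Fin m)) : Prop :=
  ∀ a b : Fin m, a < b → ∃ c : Fin m, c < b ∧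
    Fc (σ a) ∩ Fc (σ b) ⊆ Fc (σ c) ∩ Fc (σ b) ∧
    (Fc (σ c) ∩ Fc (σ b)).card + 1 = (Fc (σ b)).card

lemma shellable_iff_exists_isShelling : Shellable Fc ↔ ∃ σ, IsShelling Fc σ := Iff.rfl

lemma isShelling_of_exists_inter_nonempty [NeZero m] {σ : Equiv.Perm (Fin m)}
    (hmeet : ∀ i j, i ≠ j → (Fc i ∩ Fc j).Nonempty → (Fc i ∩ Fc j).card + 1 = (Fc j).card)
    (hprev : ∀ b, 0 < b → ∃ c < b, (Fc (σ c) ∩ Fc (σ b)).Nonempty) :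
    IsShelling Fc σ := by
  intro a b hab
  have hne : ∀ c, c < b → σ c ≠ σ b := fun c hc => σ.injective.ne hc.ne
  by_cases h : (Fc (σ a) ∩ Fc (σ b)).Nonempty
  · exact ⟨a, hab, subset_rfl, hmeet _ _ (hne a hab) h⟩
  · obtain ⟨c, hcb, hc⟩ := hprev b ((Fin.zero_le a).trans_lt hab)
    rw [not_nonempty_iff_eq_empty.mp h]
    exact ⟨c, hcb, empty_subset _, hmeet _ _ (hne c hcb) hc⟩

namespace IsShelling

variable {σ : Equiv.Perm (Fin m)}

lemma exists_adj_earlier_mem (hσ : IsShelling Fc σ) {w p : Fin m} (hp : (Fc p).card = c)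
    (hwp : σ.symm w < σ.symm p) {v : Fin n} (hvw : v ∈ Fc w) (hvp : v ∈ Fc p) :
    ∃ q, σ.symm q < σ.symm p ∧ (facetGraph Fc c).Adj q p ∧ v ∈ Fc q := by
  obtain ⟨i, hi, hsub, hcard⟩ := hσ _ _ hwp
  simp only [Equiv.apply_symm_apply] at hsub hcard
  have hv : v ∈ Fc (σ i) := (mem_inter.mp (hsub (mem_inter.mpr ⟨hvw, hvp⟩))).1
  refine ⟨σ i, by simpa using hi, ⟨?_, hp ▸ hcard⟩, hv⟩
  rintro rfl
  simp at hi

/-- That is, the facets containing `v` that come before time `T` induce a connected subgraph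
of the facet graph. -/
lemma exists_adj_of_mem_of_not_mem (hσ : IsShelling Fc σ) (hpure : ∀ i, (Fc i).card = c)
    (A : Set (Fin m)) (T : Fin m) {v : Fin n} {x y : Fin m} (hxA : x ∈ A) (hyA : y ∉ A)
    (hvx : v ∈ Fc x) (hvy : v ∈ Fc y) (hxT : σ.symm x < T) (hyT : σ.symm y < T) :
    ∃ p q, p ∈ A ∧ q ∉ A ∧ (facetGraph Fc c).Adj p q ∧ v ∈ Fc p ∧ v ∈ Fc q ∧
      σ.symm p < T ∧ σ.symm q < T := by
  classical
  obtain ⟨a, ha, ha_min⟩ := exists_min_image (univ.filter fun p => p ∈ A ∧ v ∈ Fc p) σ.symm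
    ⟨x, by simp [hxA, hvx]⟩
  obtain ⟨b, hb, hb_min⟩ := exists_min_image (univ.filter fun p => p ∉ A ∧ v ∈ Fc p) σ.symm
    ⟨y, by simp [hyA, hvy]⟩
  simp only [mem_filter, mem_univ, true_and] at ha hb ha_min hb_min
  have haT : σ.symm a < T := (ha_min x ⟨hxA, hvx⟩).trans_lt hxT
  have hbT : σ.symm b < T := (hb_min y ⟨hyA, hvy⟩).trans_lt hyT
  rcases lt_or_gt_of_ne (σ.symm.injective.ne (ne_of_mem_of_not_mem ha.1 hb.1)) with hab | hba
  · obtain ⟨q, hqb, hadj, hvq⟩ := hσ.exists_adj_earlier_mem (hpure b) hab ha.2 hb.2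
    have hqA : q ∈ A := by_contra fun hqA => (hb_min q ⟨hqA, hvq⟩).not_gt hqb
    exact ⟨q, b, hqA, hb.1, hadj, hvq, hb.2, hqb.trans hbT, hbT⟩
  · obtain ⟨q, hqa, hadj, hvq⟩ := hσ.exists_adj_earlier_mem (hpure a) hba hb.2 ha.2
    have hqA : q ∉ A := fun hqA => (ha_min q ⟨hqA, hvq⟩).not_gt hqa
    exact ⟨a, q, ha.1, hqA, hadj.symm, ha.2, hvq, haT, hqa.trans haT⟩

end IsShelling

section Cycle

variable [NeZero m] (hcyc : ∀ i j : Fin m, (facetGraph Fc c).Adj i j ↔ (j = i + 1 ∨ i = j + 1))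
include hcyc

/-- Cutting the cycle at the last facet `L` and at a facet `u` avoiding `v` separates `L - 1`
from `L + 1`; the only edges across the cut that avoid `L` end in `u`, so no edge of facets
containing `v` can cross it. -/
lemma IsShelling.forall_mem_of_mem_last {σ : Equiv.Perm (Fin m)} (hm : 2 ≤ m)
    (hσ : IsShelling Fc σ) (hpure : ∀ i, (Fc i).card = c) {v : Fin n}
    (hprev : v ∈ Fc (σ ⊤ - 1)) (hlast : v ∈ Fc (σ ⊤)) (hnext : v ∈ Fc (σ ⊤ + 1)) (u : Fin m) :
    v ∈ Fc u := by
  set L := σ ⊤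
  by_contra hvu
  have hLu : L ≠ u := fun h => hvu (h ▸ hlast)
  have hearlier : ∀ p, p ≠ L → σ.symm p < σ.symm L := fun p hp => by
    rw [σ.symm_apply_apply, lt_top_iff_ne_top]
    exact fun h => hp (by rw [← σ.apply_symm_apply p, h])
  have hpos_prev : (L - u).val = (L - 1 - u).val + 1 := by
    simpa using Fin.val_add_one_sub hm (p := L - 1) (by simpa using hLu)
  have hpos_next : (L + 1 - u).val = (L - u).val + 1 :=
    Fin.val_add_one_sub hm fun h => hvu (h ▸ hnext)
  obtain ⟨p, q, hpA, hqA, hadj, hvp, hvq, hpT, hqT⟩ :=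
    hσ.exists_adj_of_mem_of_not_mem hpure {p | (p - u).val < (L - u).val} (σ.symm L)
      (x := L - 1) (y := L + 1) (show (L - 1 - u).val < (L - u).val by omega)
      (show ¬ (L + 1 - u).val < (L - u).val by omega) hprev hnext
      (hearlier _ (Fin.sub_one_ne_self hm L)) (hearlier _ (Fin.add_one_ne_self hm L))
  change (p - u).val < (L - u).val at hpA
  change ¬ (q - u).val < (L - u).val at hqA
  rcases (hcyc p q).mp hadj with rfl | rfl
  · have hpos := Fin.val_add_one_sub hm (b := u) (p := p) fun h => hvu (by rwa [← h])
    have hqL : p + 1 = L := sub_left_inj.mp (Fin.ext (by omega) : p + 1 - u = L - u)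
    exact hqT.ne (by rw [hqL])
  · have hpos := Fin.val_add_one_sub hm (b := u) (p := q) fun h => hvu (by rwa [← h])
    omega

lemma IsShelling.card_le_two {σ : Equiv.Perm (Fin m)} (hm : 2 ≤ m) (hσ : IsShelling Fc σ)
    (hpure : ∀ i, (Fc i).card = c) (hnotall : ∀ a : Fin n, ∃ j, a ∉ Fc j) : c ≤ 2 := by
  by_contra! hc
  set L := σ ⊤
  have hcard : ∀ i, (Fc i ∩ Fc (i + 1)).card + 1 = c := fun i =>
    ((hcyc i (i + 1)).mpr (Or.inl rfl)).2
  obtain ⟨v, hv⟩ : ((Fc (L - 1) ∩ Fc L) ∩ (Fc L ∩ Fc (L + 1))).Nonempty := by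
    apply inter_nonempty_of_card_lt_card_add_card inter_subset_right inter_subset_left
    have hcard_prev := hcard (L - 1)
    rw [sub_add_cancel] at hcard_prev
    have := hcard L
    rw [hpure]
    omega
  simp only [mem_inter] at hv
  obtain ⟨a, ha⟩ := hnotall v
  exact ha (hσ.forall_mem_of_mem_last hcyc hm hpure hv.1.1 hv.1.2 hv.2.2 a)

lemma two_le_card_of_cycle (hm : 4 ≤ m) (hinj : Function.Injective Fc)
    (hpure : ∀ i, (Fc i).card = c) : 2 ≤ c := by
  by_contra! hc
  have hadj : ∀ i j : Fin m, i ≠ j → j = i + 1 ∨ i = j + 1 := fun i j hij =>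
    (hcyc i j).mp ⟨hij, by have := card_inter_lt_of_injective hinj hpure hij; omega⟩
  have h01 : (⟨0, by omega⟩ : Fin m) ≠ ⟨1, by omega⟩ := by simp
  have h02 : (⟨0, by omega⟩ : Fin m) ≠ ⟨2, by omega⟩ := by simp
  have h12 : (⟨1, by omega⟩ : Fin m) ≠ ⟨2, by omega⟩ := by simp
  exact Fin.false_of_cycle_triangle hm (hadj _ _ h01) (hadj _ _ h02) (hadj _ _ h12)

end Cycle

lemma exists_equiv_eq_pair [NeZero m] (hm : 4 ≤ m) (hinj : Function.Injective Fc)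
    (hpure : ∀ i, (Fc i).card = 2) (hcover : ∀ a : Fin n, ∃ j, a ∈ Fc j)
    (hcyc : ∀ i j : Fin m, (facetGraph Fc 2).Adj i j ↔ (j = i + 1 ∨ i = j + 1)) :
    ∃ s : Fin m ≃ Fin n, ∀ j, Fc j = {s (j - 1), s j} := by
  have hadj : ∀ i j, i ≠ j → (Fc i ∩ Fc j).Nonempty → j = i + 1 ∨ i = j + 1 := fun i j hij h =>
    (hcyc i j).mp ⟨hij, by
      have := card_inter_lt_of_injective hinj hpure hij
      have := h.card_pos
      omega⟩
  have hthree : ∀ {a i j k}, a ∈ Fc i → a ∈ Fc j → a ∈ Fc k → i ≠ j → i ≠ k → j ≠ k → False :=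
    fun hi hj hk hij hik hjk => Fin.false_of_cycle_triangle hm
      (hadj _ _ hij ⟨_, mem_inter.mpr ⟨hi, hj⟩⟩) (hadj _ _ hik ⟨_, mem_inter.mpr ⟨hi, hk⟩⟩)
      (hadj _ _ hjk ⟨_, mem_inter.mpr ⟨hj, hk⟩⟩)
  choose s hs using fun i => card_eq_one.mp (by
    have := ((hcyc i (i + 1)).mpr (Or.inl rfl)).2
    omega : (Fc i ∩ Fc (i + 1)).card = 1)
  have hs_mem : ∀ i, s i ∈ Fc i ∧ s i ∈ Fc (i + 1) := fun i =>
    mem_inter.mp (hs i ▸ mem_singleton_self _)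
  have hsucc : ∀ i : Fin m, i ≠ i + 1 := fun i => (Fin.add_one_ne_self (by omega) i).symm
  have hs_inj : Function.Injective s := by
    intro i j hij
    by_contra hij'
    by_cases hj : j = i + 1
    · subst hj
      exact hthree (hs_mem i).1 (hs_mem i).2 (hij ▸ (hs_mem (i + 1)).2) (hsucc i)
        (Fin.add_one_add_one_ne_self (by omega) i).symm (hsucc (i + 1))
    · exact hthree (hs_mem i).1 (hs_mem i).2 (hij ▸ (hs_mem j).1) (hsucc i) hij' (Ne.symm hj)
  have hFc : ∀ j, Fc j = {s (j - 1), s j} := fun j => by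
    have hprev : s (j - 1) ∈ Fc j := by simpa using (hs_mem (j - 1)).2
    refine (eq_of_subset_of_card_le (insert_subset hprev (singleton_subset_iff.mpr
      (hs_mem j).1)) ?_).symm
    rw [hpure, card_pair (hs_inj.ne (by simpa using hsucc (j - 1)))]
  have hs_surj : Function.Surjective s := fun a => by
    obtain ⟨j, hj⟩ := hcover a
    rw [hFc j, mem_insert, mem_singleton] at hj
    exact hj.elim (fun h => ⟨_, h.symm⟩) (fun h => ⟨_, h.symm⟩)
  exact ⟨Equiv.ofBijective s ⟨hs_inj, hs_surj⟩, hFc⟩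

lemma isShelling_one_of_eq_pair [NeZero m] (hm : 2 ≤ m) (hinj : Function.Injective Fc)
    (s : Fin m ≃ Fin n) (hFc : ∀ j, Fc j = {s (j - 1), s j}) : IsShelling Fc 1 := by
  have hcard : ∀ j, (Fc j).card = 2 := fun j => by
    rw [hFc, card_pair (s.injective.ne (Fin.sub_one_ne_self hm j))]
  refine isShelling_of_exists_inter_nonempty (fun i j hij h => ?_) (fun b hb => ?_)
  · have := card_inter_lt_of_injective hinj hcard hij
    have := h.card_pos
    rw [hcard]
    omega
  · refine ⟨b - 1, ?_, s (b - 1), ?_⟩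
    · rw [Fin.lt_def, Fin.val_sub_one_of_ne_zero hb.ne']
      exact Nat.sub_lt hb (by omega)
    · simp [hFc]

/-- Suppose every vertex lies in some facet but no vertex lies in all facets,
and the facet graph `G_Δ` is the cycle `Fc 0 — Fc 1 — ⋯ — Fc (m-1) — Fc 0` with `m ≥ 4`.
Then `Δ` is shellable iff `m = n` and, after a suitable relabeling of the facets and
vertices, vertex `a` belongs to exactly the facets `F (e a)` and `F (e a + 1)`. -/
theorem stmt18 {n m c : ℕ} [NeZero m] (hm : 4 ≤ m)
    (Fc : Fin m → Finset (Fin n)) (hinj : Function.Injective Fc)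
    (hpure : ∀ i, (Fc i).card = c)
    (hcover : ∀ a : Fin n, ∃ j, a ∈ Fc j)
    (hnotall : ∀ a : Fin n, ∃ j, a ∉ Fc j)
    (hcyc : ∀ i j : Fin m, (facetGraph Fc c).Adj i j ↔ (j = i + 1 ∨ i = j + 1)) :
    Shellable Fc ↔
      (m = n ∧ ∃ e : Fin n ≃ Fin m, ∀ (a : Fin n) (j : Fin m),
        a ∈ Fc j ↔ (j = e a ∨ j = e a + 1)) := by
  rw [shellable_iff_exists_isShelling]
  constructor
  · rintro ⟨σ, hσ⟩
    obtain rfl : c = 2 := le_antisymm (hσ.card_le_two hcyc (by omega) hpure hnotall)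
      (two_le_card_of_cycle hcyc hm hinj hpure)
    obtain ⟨s, hs⟩ := exists_equiv_eq_pair hm hinj hpure hcover hcyc
    exact ⟨Fin.equiv_iff_eq.mp ⟨s⟩, s.symm, (forall_mem_iff_iff_forall_eq_pair s).mpr hs⟩
  · rintro ⟨-, e, he⟩
    exact ⟨1, isShelling_one_of_eq_pair (by omega) hinj e.symm
      ((forall_mem_iff_iff_forall_eq_pair _).mp he)⟩
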